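/- For real numbers 0 < q < p ≤ 1, the (p,q)-binomial expansion holds: ∏_{s=0}^{n−1}(p^s x + q^s y) = ∑_{k=0}^{n} [n choose k]_{p,q} p^{(n−k)(n−k−1)/2} q^{k(k−1)/2} x^{n−k} y^k for all real x, y, where [n choose k]_{p,q} = [n]_{p,q}!/([k]_{p,q}! [n−k]_{p,q}!) with [j]_{p,q}! = ∏_{i=1}^{j}[i]_{p,q}. -/

import Mathlib

open Finset

noncomputable def pqInt (p q : ℝ) (n : ℕ) : ℝ := (p ^ n - q ^ n) / (p - q)

noncomputable def pqFact (p q : ℝ) (n : ℕ) : ℝ := ∏ i ∈ Finset.range n, pqInt p q (i + 1)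

noncomputable def pqChoose (p q : ℝ) (n k : ℕ) : ℝ :=
  pqFact p q n / (pqFact p q k * pqFact p q (n - k))

noncomputable def Cop (p q : ℝ) (n m α β : ℕ) (b : ℝ) (f : ℝ → ℝ) (x : ℝ) : ℝ :=
  (1 / p ^ (n * (n - 1) / 2)) *
    ∑ k ∈ Finset.range (n + m + 1),
      pqChoose p q (n + m) k * p ^ (k * (k - 1) / 2) * (x / b) ^ k *
        (∏ s ∈ Finset.range (n + m - k), (p ^ s - q ^ s * (x / b))) *
        f ((p ^ ((n : ℤ) - (k : ℤ)) * pqInt p q k + (α : ℝ)) / (pqInt p q n + (β : ℝ)) * b)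

/-!
Multiplying the expansion for `n` factors by `p ^ n * x + q ^ n * y` shows that the coefficients
must obey the Pascal rule `[n+1, k+1] = p^(k+1) [n, k+1] + q^(n-k) [n, k]`, and this rule follows
from the splitting `[m + n] = p^m [n] + q^n [m]` of the `(p,q)`-integers.
-/

theorem prod_range_add_eq_sum_of_pascal {R : Type*} [CommSemiring R] (u v : ℕ → R)
    (d : ℕ → ℕ → R) (h₀ : d 0 0 = 1) (h_left : ∀ n, d (n + 1) 0 = u n * d n 0)
    (h_right : ∀ n, d (n + 1) (n + 1) = v n * d n n)
    (h_mid : ∀ n k, k < n → d (n + 1) (k + 1) = u n * d n (k + 1) + v n * d n k) (n : ℕ) :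
    ∏ s ∈ range n, (u s + v s) = ∑ k ∈ range (n + 1), d n k := by
  induction n with
  | zero => simp [h₀]
  | succ n ih =>
    have h_split : ∑ k ∈ range (n + 1), d n k * u n + ∑ k ∈ range (n + 1), d n k * v n =
        d n 0 * u n + ∑ k ∈ range n, (u n * d n (k + 1) + v n * d n k) + d n n * v n := by
      rw [sum_range_succ' _ n, sum_range_succ _ n, sum_add_distrib]
      simp only [mul_comm (u n), mul_comm (v n)]
      ring
    rw [prod_range_succ, ih, mul_add, sum_mul, sum_mul, h_split, sum_range_succ _ (n + 1),
      sum_range_succ', h_left, h_right,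
      sum_congr rfl fun k hk => h_mid n k (mem_range.1 hk)]
    ring

section PQ

variable {p q : ℝ}

theorem pqInt_add (m n : ℕ) : pqInt p q (m + n) = p ^ m * pqInt p q n + q ^ n * pqInt p q m := by
  simp only [pqInt, mul_div_assoc', ← add_div]
  ring_nf

theorem pqInt_succ_pos (hq : 0 ≤ q) (hqp : q < p) (n : ℕ) : 0 < pqInt p q (n + 1) :=
  div_pos (sub_pos.2 (pow_lt_pow_left₀ hqp hq n.succ_ne_zero)) (sub_pos.2 hqp)

theorem pqFact_pos (hq : 0 ≤ q) (hqp : q < p) (n : ℕ) : 0 < pqFact p q n :=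
  prod_pos fun i _ => pqInt_succ_pos hq hqp i

theorem pqFact_zero : pqFact p q 0 = 1 :=
  prod_range_zero _

theorem pqFact_succ (n : ℕ) : pqFact p q (n + 1) = pqFact p q n * pqInt p q (n + 1) :=
  prod_range_succ _ _

theorem pqChoose_zero_right (hq : 0 ≤ q) (hqp : q < p) (n : ℕ) : pqChoose p q n 0 = 1 := by
  rw [pqChoose, Nat.sub_zero, pqFact_zero, one_mul, div_self (pqFact_pos hq hqp n).ne']

theorem pqChoose_self (hq : 0 ≤ q) (hqp : q < p) (n : ℕ) : pqChoose p q n n = 1 := by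
  rw [pqChoose, Nat.sub_self, pqFact_zero, mul_one, div_self (pqFact_pos hq hqp n).ne']

theorem pqChoose_succ_succ (hq : 0 ≤ q) (hqp : q < p) (a b : ℕ) :
    pqChoose p q (a + b + 2) (a + 1) =
      p ^ (a + 1) * pqChoose p q (a + b + 1) (a + 1) + q ^ (b + 1) * pqChoose p q (a + b + 1) a := by
  have hFa := (pqFact_pos hq hqp a).ne'
  have hFb := (pqFact_pos hq hqp b).ne'
  have hIa := (pqInt_succ_pos hq hqp a).ne'
  have hIb := (pqInt_succ_pos hq hqp b).ne'
  rw [pqChoose, pqChoose, pqChoose, show a + b + 2 - (a + 1) = b + 1 by omega,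
    show a + b + 1 - (a + 1) = b by omega, show a + b + 1 - a = b + 1 by omega,
    pqFact_succ (a + b + 1), show a + b + 1 + 1 = (a + 1) + (b + 1) by omega, pqInt_add,
    pqFact_succ a, pqFact_succ b]
  field_simp

end PQ

section Expansion

variable {p q : ℝ} (x y : ℝ)

noncomputable def pqTerm (p q x y : ℝ) (n k : ℕ) : ℝ :=
  pqChoose p q n k * p ^ ((n - k) * (n - k - 1) / 2) * q ^ (k * (k - 1) / 2) * x ^ (n - k) * y ^ k

theorem pqTerm_zero_zero : pqTerm p q x y 0 0 = 1 := by
  simp [pqTerm, pqChoose, pqFact_zero]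

variable (hq : 0 ≤ q) (hqp : q < p)
include hq hqp

theorem pqTerm_succ_zero (n : ℕ) : pqTerm p q x y (n + 1) 0 = p ^ n * x * pqTerm p q x y n 0 := by
  simp only [pqTerm, pqChoose_zero_right hq hqp, Nat.sub_zero, Nat.triangle_succ, pow_add]
  ring

theorem pqTerm_succ_self (n : ℕ) :
    pqTerm p q x y (n + 1) (n + 1) = q ^ n * y * pqTerm p q x y n n := by
  simp only [pqTerm, pqChoose_self hq hqp, Nat.sub_self, Nat.triangle_succ, pow_add]
  ring

theorem pqTerm_succ_succ {n k : ℕ} (hk : k < n) :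
    pqTerm p q x y (n + 1) (k + 1) =
      p ^ n * x * pqTerm p q x y n (k + 1) + q ^ n * y * pqTerm p q x y n k := by
  obtain ⟨b, rfl⟩ : ∃ b, n = k + b + 1 := ⟨n - k - 1, by omega⟩
  have hb : (b + 1) * b / 2 = b * (b - 1) / 2 + b := Nat.triangle_succ b
  have hk : (k + 1) * k / 2 = k * (k - 1) / 2 + k := Nat.triangle_succ k
  rw [pqTerm, pqTerm, pqTerm, show k + b + 1 + 1 = k + b + 2 by omega, pqChoose_succ_succ hq hqp,
    show k + b + 2 - (k + 1) = b + 1 by omega, show k + b + 1 - (k + 1) = b by omega,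
    show k + b + 1 - k = b + 1 by omega, Nat.add_sub_cancel, Nat.add_sub_cancel, hb, hk]
  ring

end Expansion

theorem stmt6_general (p q : ℝ) (hq : 0 < q) (hqp : q < p) (n : ℕ) (x y : ℝ) :
    ∏ s ∈ Finset.range n, (p ^ s * x + q ^ s * y) =
      ∑ k ∈ Finset.range (n + 1),
        pqChoose p q n k * p ^ ((n - k) * (n - k - 1) / 2) * q ^ (k * (k - 1) / 2) *
          x ^ (n - k) * y ^ k :=
  prod_range_add_eq_sum_of_pascal _ _ (pqTerm p q x y) (pqTerm_zero_zero x y)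
    (pqTerm_succ_zero x y hq.le hqp) (pqTerm_succ_self x y hq.le hqp)
    (fun _ _ => pqTerm_succ_succ x y hq.le hqp) n

theorem stmt6 (p q : ℝ) (hq : 0 < q) (hqp : q < p) (hp : p ≤ 1) (n : ℕ) (x y : ℝ) :
    ∏ s ∈ Finset.range n, (p ^ s * x + q ^ s * y) =
      ∑ k ∈ Finset.range (n + 1),
        pqChoose p q n k * p ^ ((n - k) * (n - k - 1) / 2) * q ^ (k * (k - 1) / 2) *
          x ^ (n - k) * y ^ k :=
  stmt6_general p q hq hqp n x y
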